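/- arXiv:1808.08291 — 2 statements merged into one kernel-verified Lean document; each statement's English description precedes it below -/
import Mathlib

section
/- For a functor F : C ⥤ D between categories and a flat presheaf (torsor) T on C, the tensor T ⊗_C D (with elements pairs (x, f) where x ∈ T, f a morphism of D with domain F(p(x)), modulo (x, u·f) ∼ (x·u, f)) is a flat presheaf on D. -/
open CategoryTheory

universe v₁ u₁ v₂ u₂ w

namespace PaperTor

/-- A (set-valued) right action of a category `C` on a set over `ob C` — the
paper's presentation of a functor `C ⥤ Set` as a discrete fibration-style action:
an element `x` over `p x` and a morphism `u : p x ⟶ c` produce an element `x·u`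
over `c`. -/
structure CAction (C : Type u₁) [Category.{v₁} C] where
  carrier : Type w
  p : carrier → C
  act : ∀ (x : carrier) {c : C}, (p x ⟶ c) → carrier
  act_p : ∀ (x : carrier) {c : C} (u : p x ⟶ c), p (act x u) = c
  act_id : ∀ x : carrier, act x (𝟙 (p x)) = x
  act_comp : ∀ (x : carrier) {c c' : C} (u : p x ⟶ c) (v : c ⟶ c'),
    act x (u ≫ v) = act (act x u) (eqToHom (act_p x u) ≫ v)

variable {C : Type u₁} [Category.{v₁} C]

/-- Flatness (torsor conditions) for an action: (1) nonempty; (2) any two elements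
are restrictions of a common element; (3) any pair of morphisms equalized by an
element is pre-equalized. -/
def CAction.Flat (T : CAction.{v₁, u₁, w} C) : Prop :=
  Nonempty T.carrier ∧
  (∀ x y : T.carrier, ∃ (z : T.carrier) (u : T.p z ⟶ T.p x) (v : T.p z ⟶ T.p y),
    x = T.act z u ∧ y = T.act z v) ∧
  (∀ (x : T.carrier) {c : C} (u v : T.p x ⟶ c), T.act x u = T.act x v →
    ∃ (z : T.carrier) (w : T.p z ⟶ T.p x),
      x = T.act z w ∧ w ≫ u = w ≫ v)

variable {D : Type u₂} [Category.{v₂} D]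

/-- The set of pairs `(x, f)` with `x ∈ T` and `f : F(p x) ⟶ d` a morphism of `D`. -/
def TPair (F : C ⥤ D) (T : CAction.{v₁, u₁, w} C) : Type _ :=
  Σ (x : T.carrier) (d : D), F.obj (T.p x) ⟶ d

/-- The base relation generating the tensor equivalence:
`(x, F(u) ≫ f) ∼ (x·u, f)`. -/
def tensorRel (F : C ⥤ D) (T : CAction.{v₁, u₁, w} C) : TPair F T → TPair F T → Prop :=
  fun a b =>
    ∃ (c : C) (u : T.p a.1 ⟶ c) (f : F.obj c ⟶ a.2.1),
      a.2.2 = F.map u ≫ f ∧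
      b = ⟨T.act a.1 u, a.2.1, eqToHom (congrArg F.obj (T.act_p a.1 u)) ≫ f⟩

/-- The underlying set of the tensor `T ⊗_C D`: pairs modulo the equivalence
relation generated by `tensorRel`. -/
def Tensor (F : C ⥤ D) (T : CAction.{v₁, u₁, w} C) : Type _ :=
  Quot (tensorRel F T)

/-- The class of a pair in the tensor. -/
def tmk (F : C ⥤ D) (T : CAction.{v₁, u₁, w} C) (a : TPair F T) : Tensor F T :=
  Quot.mk _ a


/-- The evident right `D`-action on pairs: `(x, f) · g = (x, f ≫ g)`. -/
def TPair.actD {C : Type u₁} [Category.{v₁} C] {D : Type u₂} [Category.{v₂} D]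
    {F : C ⥤ D} {T : CAction.{v₁, u₁, w} C}
    (a : TPair F T) {d' : D} (g : a.2.1 ⟶ d') : TPair F T :=
  ⟨a.1, d', a.2.2 ≫ g⟩


section Aux

variable {C : Type u₁} [Category.{v₁} C] {D : Type u₂} [Category.{v₂} D]

lemma actAct (T : CAction.{v₁, u₁, w} C) (x : T.carrier) {c c' : C}
    (u : T.p x ⟶ c) (v : T.p (T.act x u) ⟶ c') :
    T.act (T.act x u) v = T.act x (u ≫ eqToHom (T.act_p x u).symm ≫ v) := by
  rw [T.act_comp]
  congr 1
  simp

lemma act_of_eq (T : CAction.{v₁, u₁, w} C) {x y : T.carrier} (h : x = y)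
    (e : T.p y = T.p x) {c : C} (u : T.p x ⟶ c) :
    T.act x u = T.act y (eqToHom e ≫ u) := by
  subst h
  have : eqToHom e = 𝟙 _ := by simp
  rw [this, Category.id_comp]

lemma pair_eq (F : C ⥤ D) (T : CAction.{v₁, u₁, w} C) (x y : T.carrier)
    (h : x = y) (e : T.p y = T.p x) {d : D} (f : F.obj (T.p x) ⟶ d) :
    (⟨x, d, f⟩ : TPair F T) = ⟨y, d, eqToHom (congrArg F.obj e) ≫ f⟩ := by
  subst h
  have : eqToHom (congrArg F.obj e) = 𝟙 _ := by simp
  rw [this, Category.id_comp]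

lemma key (F : C ⥤ D) (T : CAction.{v₁, u₁, w} C) (z x : T.carrier)
    (u : T.p z ⟶ T.p x) (hx : x = T.act z u) {d : D} (f : F.obj (T.p x) ⟶ d) :
    tmk F T ⟨x, d, f⟩ = tmk F T ⟨z, d, F.map u ≫ f⟩ := by
  have h2 : tmk F T ⟨z, d, F.map u ≫ f⟩
      = tmk F T ⟨T.act z u, d, eqToHom (congrArg F.obj (T.act_p z u)) ≫ f⟩ :=
    Quot.sound ⟨T.p x, u, f, rfl, rfl⟩
  rw [h2]
  exact congrArg (tmk F T) (pair_eq F T x (T.act z u) hx (T.act_p z u) f)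

/-- The span-style description of the tensor equivalence relation. -/
def Rp (F : C ⥤ D) (T : CAction.{v₁, u₁, w} C) (a b : TPair F T) : Prop :=
  ∃ (z : T.carrier) (s : T.p z ⟶ T.p a.1) (t : T.p z ⟶ T.p b.1) (h : a.2.1 = b.2.1),
    a.1 = T.act z s ∧ b.1 = T.act z t ∧
    F.map s ≫ a.2.2 ≫ eqToHom h = F.map t ≫ b.2.2

lemma Rp_refl (F : C ⥤ D) (T : CAction.{v₁, u₁, w} C) (a : TPair F T) : Rp F T a a :=
  ⟨a.1, 𝟙 _, 𝟙 _, rfl, (T.act_id a.1).symm, (T.act_id a.1).symm, by simp⟩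

lemma Rp_symm (F : C ⥤ D) (T : CAction.{v₁, u₁, w} C) {a b : TPair F T}
    (hab : Rp F T a b) : Rp F T b a := by
  obtain ⟨z, s, t, h, h1, h2, e⟩ := hab
  refine ⟨z, t, s, h.symm, h2, h1, ?_⟩
  rw [← reassoc_of% e]
  simp

lemma rel_Rp (F : C ⥤ D) (T : CAction.{v₁, u₁, w} C) {a b : TPair F T}
    (hab : tensorRel F T a b) : Rp F T a b := by
  obtain ⟨c, u, f, hf, hb⟩ := hab
  subst hb
  refine ⟨a.1, 𝟙 _, u ≫ eqToHom (T.act_p a.1 u).symm, rfl, (T.act_id a.1).symm, ?_, ?_⟩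
  · rw [T.act_comp]
    simp [T.act_id]
  · simp [hf, eqToHom_map]

lemma Rp_trans (F : C ⥤ D) (T : CAction.{v₁, u₁, w} C) (hT : T.Flat) {a b c : TPair F T}
    (hab : Rp F T a b) (hbc : Rp F T b c) : Rp F T a c := by
  obtain ⟨z₁, s₁, t₁, h₁, ha, hb, e₁⟩ := hab
  obtain ⟨z₂, s₂, t₂, h₂, hb', hc, e₂⟩ := hbc
  obtain ⟨w, α, β, hz₁, hz₂⟩ := hT.2.1 z₁ z₂
  have hb2 : b.1 = T.act w (α ≫ t₁) := hb.trans (by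
    rw [act_of_eq T hz₁ (T.act_p w α) t₁, actAct]
    congr 1
    simp)
  have hb'2 : b.1 = T.act w (β ≫ s₂) := hb'.trans (by
    rw [act_of_eq T hz₂ (T.act_p w β) s₂, actAct]
    congr 1
    simp)
  obtain ⟨z', r, hw, hr⟩ := hT.2.2 w (α ≫ t₁) (β ≫ s₂) (hb2.symm.trans hb'2)
  have ha2 : a.1 = T.act z' (r ≫ α ≫ s₁) := ha.trans (by
    rw [act_of_eq T hz₁ (T.act_p w α) s₁, actAct,
      act_of_eq T hw (T.act_p z' r), actAct]
    congr 1
    simp)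
  have hc2 : c.1 = T.act z' (r ≫ β ≫ t₂) := hc.trans (by
    rw [act_of_eq T hz₂ (T.act_p w β) t₂, actAct,
      act_of_eq T hw (T.act_p z' r), actAct]
    congr 1
    simp)
  refine ⟨z', r ≫ α ≫ s₁, r ≫ β ≫ t₂, h₁.trans h₂, ha2, hc2, ?_⟩
  have hr' : ∀ {Z : D} (k : F.obj (T.p b.1) ⟶ Z),
      F.map r ≫ F.map α ≫ F.map t₁ ≫ k = F.map r ≫ F.map β ≫ F.map s₂ ≫ k := by
    intro Z k
    rw [← Category.assoc, ← Category.assoc, ← F.map_comp, ← F.map_comp,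
        ← Category.assoc, ← Category.assoc, ← F.map_comp, ← F.map_comp]
    congr 2
    simpa using hr
  rw [← eqToHom_trans h₁ h₂]
  simp only [F.map_comp, Category.assoc]
  rw [reassoc_of% e₁, ← e₂, hr' (b.2.2 ≫ eqToHom h₂)]

lemma eqvGen_Rp (F : C ⥤ D) (T : CAction.{v₁, u₁, w} C) (hT : T.Flat) {a b : TPair F T}
    (hab : Relation.EqvGen (tensorRel F T) a b) : Rp F T a b := by
  induction hab with
  | rel x y h => exact rel_Rp F T h
  | refl x => exact Rp_refl F T x
  | symm x y h ih => exact Rp_symm F T ih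
  | trans x y z h1 h2 ih1 ih2 => exact Rp_trans F T hT ih1 ih2

end Aux

/-!
STATEMENT 16: for a functor `F : C ⥤ D` and a flat presheaf (torsor) `T` over `C`,
the tensor `T ⊗_C D` (pairs `(x, f)` with `f` a morphism of `D` out of `F(p x)`,
modulo `(x, F(u) ≫ f) ∼ (x·u, f)`), with its evident right `D`-action, is a flat
presheaf over `D`: it is (1) nonempty, (2) any two elements are restrictions of a
common element, and (3) morphisms equalized by an element are pre-equalized.
-/
theorem stmt16 {C : Type u₁} [Category.{v₁} C] {D : Type u₂} [Category.{v₂} D]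
    (F : C ⥤ D) (T : CAction.{v₁, u₁, w} C) (hT : T.Flat) :
    -- (1) nonemptiness
    Nonempty (Tensor F T) ∧
    -- (2) any two elements come from a common element
    (∀ a b : TPair F T,
      ∃ (z : TPair F T) (u : z.2.1 ⟶ a.2.1) (v : z.2.1 ⟶ b.2.1),
        tmk F T a = tmk F T (z.actD u) ∧ tmk F T b = tmk F T (z.actD v)) ∧
    -- (3) equalized morphisms are pre-equalized
    (∀ (a : TPair F T) {d' : D} (u v : a.2.1 ⟶ d'),
      tmk F T (a.actD u) = tmk F T (a.actD v) →
        ∃ (z : TPair F T) (w : z.2.1 ⟶ a.2.1),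
          tmk F T a = tmk F T (z.actD w) ∧ w ≫ u = w ≫ v) := by
  obtain ⟨hne, hflat2, hflat3⟩ := hT
  refine ⟨?_, ?_, ?_⟩
  · obtain ⟨x⟩ := hne
    exact ⟨tmk F T ⟨x, F.obj (T.p x), 𝟙 _⟩⟩
  · rintro ⟨x, d, f⟩ ⟨y, e, g⟩
    obtain ⟨z, u, v, hx, hy⟩ := hflat2 x y
    refine ⟨⟨z, F.obj (T.p z), 𝟙 _⟩, F.map u ≫ f, F.map v ≫ g, ?_, ?_⟩
    · exact (key F T z x u hx f).trans (congrArg (tmk F T) (by simp [TPair.actD]; rfl))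
    · exact (key F T z y v hy g).trans (congrArg (tmk F T) (by simp [TPair.actD]; rfl))
  · rintro ⟨x, d, f⟩ d' u v huv
    have h := Quot.eqvGen_exact huv
    have hR := eqvGen_Rp F T ⟨hne, hflat2, hflat3⟩ h
    obtain ⟨z, s, t, h0, hx1, hx2, e⟩ := hR
    obtain ⟨z'', r, hz, hr⟩ := hflat3 z s t (hx1.symm.trans hx2)
    have hx3 : x = T.act z'' (r ≫ s) := hx1.trans (by
      rw [act_of_eq T hz (T.act_p z'' r), actAct]
      congr 1
      simp)
    have e' : F.map s ≫ f ≫ u = F.map t ≫ f ≫ v := by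
      have h0' : eqToHom h0 = 𝟙 _ := rfl
      simpa [TPair.actD, h0'] using e
    refine ⟨⟨z'', F.obj (T.p z''), 𝟙 _⟩, F.map (r ≫ s) ≫ f, ?_, ?_⟩
    · exact (key F T z'' x (r ≫ s) hx3 f).trans (congrArg (tmk F T) (by simp [TPair.actD]; rfl))
    · have hr' : ∀ {Z : D} (k : F.obj (T.p x) ⟶ Z),
          F.map r ≫ F.map s ≫ k = F.map r ≫ F.map t ≫ k := by
        intro Z k
        exact (F.map_comp_assoc r s k).symm.trans ((congrArg (fun m => F.map m ≫ k) hr).trans (F.map_comp_assoc r t k))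
      show (F.map (r ≫ s) ≫ f) ≫ u = (F.map (r ≫ s) ≫ f) ≫ v
      exact (Category.assoc _ _ _).trans ((F.map_comp_assoc r s (f ≫ u)).trans ((congrArg (fun k => F.map r ≫ k) e').trans ((hr' (f ≫ v)).symm.trans ((F.map_comp_assoc r s (f ≫ v)).symm.trans (Category.assoc _ _ _).symm))))


end PaperTor
end

section
/- In the proof of flatness of T ⊗_C D: if (x,f) = (x',f') in T ⊗_C D (i.e., they are related by the equivalence relation generated by (x, u·f) ∼ (x·u, f)), then there exist y ∈ T and finite sequences (k_i)_{0≤i≤n}, (u_i), (v_i), (u'_i)_{0≤i<n} with u_i k_i = u'_i k_{i+1}, v_i u'_i = v_{i+1} u_{i+1}, f = k_0, x = y·(v_0 u_0), f' = k_n, and x' = y·(v_{n-1} u'_{n-1}). -/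
open CategoryTheory

universe v₁ u₁ v₂ u₂ w

namespace PaperTor

variable {C : Type u₁} [Category.{v₁} C]

variable {D : Type u₂} [Category.{v₂} D]

/-!
STATEMENT 18: analysis of equality in `T ⊗_C D` for a flat `T`.  If
`(x, f) = (x', f')` in the tensor (i.e. the pairs are related by the equivalence
relation generated by `(x, F(u) ≫ f) ∼ (x·u, f)`), then there are `y ∈ T`, `n ≥ 1`
and finite sequences `(k_i)_{0 ≤ i ≤ n}`, `(u_i), (v_i), (u'_i)_{0 ≤ i < n}` with
`u_i k_i = u'_i k_{i+1}`, `v_i u'_i = v_{i+1} u_{i+1}`, `f = k_0`,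
`x = y·(v_0 u_0)`, `f' = k_n` and `x' = y·(v_{n-1} u'_{n-1})`.
-/

section Helpers

variable {C : Type u₁} [Category.{v₁} C] {D : Type u₂} [Category.{v₂} D]

lemma CAction.act_ext (T : CAction.{v₁, u₁, w} C) {y x : T.carrier} {c : C}
    (w : T.p y ⟶ c) (hx : x = T.act y w) (e : c = T.p x) {c' : C} (ψ : T.p x ⟶ c') :
    T.act x ψ = T.act y (w ≫ eqToHom e ≫ ψ) := by
  subst hx
  rw [T.act_comp, eqToHom_trans_assoc]
  simp

lemma CAction.act_eqToHom (T : CAction.{v₁, u₁, w} C) (x : T.carrier) {c : C}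
    (h : T.p x = c) : T.act x (eqToHom h) = x := by
  subst h; simp [T.act_id]

/-- The zig-zag predicate: the conclusion of statement 18, for fixed `d`. -/
def ZZ (F : C ⥤ D) (T : CAction.{v₁, u₁, w} C) {d : D}
    (x : T.carrier) (f : F.obj (T.p x) ⟶ d)
    (x' : T.carrier) (f' : F.obj (T.p x') ⟶ d) : Prop :=
  ∃ (y : T.carrier) (n : ℕ), 0 < n ∧
    ∃ (b : ℕ → C) (c : ℕ → C)
      (k : ∀ i : ℕ, F.obj (c i) ⟶ d)
      (u : ∀ i : ℕ, b i ⟶ c i)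
      (u' : ∀ i : ℕ, b i ⟶ c (i + 1))
      (v : ∀ i : ℕ, T.p y ⟶ b i),
      (∀ i : ℕ, i < n → F.map (u i) ≫ k i = F.map (u' i) ≫ k (i + 1)) ∧
      (∀ i : ℕ, i + 1 < n → v i ≫ u' i = v (i + 1) ≫ u (i + 1)) ∧
      (∃ hc0 : c 0 = T.p x, k 0 = eqToHom (congrArg F.obj hc0) ≫ f) ∧
      x = T.act y (v 0 ≫ u 0) ∧
      (∃ hcn : c n = T.p x', k n = eqToHom (congrArg F.obj hcn) ≫ f') ∧
      x' = T.act y (v (n - 1) ≫ u' (n - 1))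

/-- A single zig-zag step. -/
def SStep (F : C ⥤ D) (T : CAction.{v₁, u₁, w} C) {d : D}
    (x : T.carrier) (f : F.obj (T.p x) ⟶ d)
    (x' : T.carrier) (f' : F.obj (T.p x') ⟶ d) : Prop :=
  ∃ (b c0 c1 : C) (k0 : F.obj c0 ⟶ d) (k1 : F.obj c1 ⟶ d)
    (u : b ⟶ c0) (u' : b ⟶ c1) (y : T.carrier) (v : T.p y ⟶ b),
    F.map u ≫ k0 = F.map u' ≫ k1 ∧
    (∃ hc0 : c0 = T.p x, k0 = eqToHom (congrArg F.obj hc0) ≫ f) ∧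
    x = T.act y (v ≫ u) ∧
    (∃ hc1 : c1 = T.p x', k1 = eqToHom (congrArg F.obj hc1) ≫ f') ∧
    x' = T.act y (v ≫ u')

lemma sstep_fwd (F : C ⥤ D) (T : CAction.{v₁, u₁, w} C) {d : D}
    (x : T.carrier) {c : C} (u : T.p x ⟶ c) (g : F.obj c ⟶ d) :
    SStep F T x (F.map u ≫ g) (T.act x u)
      (eqToHom (congrArg F.obj (T.act_p x u)) ≫ g) := by
  refine ⟨T.p x, T.p x, T.p (T.act x u), F.map u ≫ g,
    eqToHom (congrArg F.obj (T.act_p x u)) ≫ g,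
    𝟙 _, u ≫ eqToHom (T.act_p x u).symm, x, 𝟙 _, ?_, ⟨rfl, by simp⟩, ?_, ⟨rfl, by simp⟩, ?_⟩
  · simp [eqToHom_map]
  · simp [T.act_id]
  · rw [Category.id_comp, T.act_comp]
    simp [T.act_id]

lemma sstep_symm (F : C ⥤ D) (T : CAction.{v₁, u₁, w} C) {d : D}
    {x : T.carrier} {f : F.obj (T.p x) ⟶ d}
    {x' : T.carrier} {f' : F.obj (T.p x') ⟶ d}
    (h : SStep F T x f x' f') : SStep F T x' f' x f := by
  obtain ⟨b, c0, c1, k0, k1, u, u', y, v, h1, h2, h3, h4, h5⟩ := h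
  exact ⟨b, c1, c0, k1, k0, u', u, y, v, h1.symm, h4, h5, h2, h3⟩



lemma sstep_refl (F : C ⥤ D) (T : CAction.{v₁, u₁, w} C) {d : D}
    (x : T.carrier) (f : F.obj (T.p x) ⟶ d) : SStep F T x f x f :=
  ⟨T.p x, T.p x, T.p x, f, f, 𝟙 _, 𝟙 _, x, 𝟙 _, rfl, ⟨rfl, by simp⟩,
    by simp [T.act_id], ⟨rfl, by simp⟩, by simp [T.act_id]⟩

lemma sstep_to_zz (F : C ⥤ D) (T : CAction.{v₁, u₁, w} C) {d : D}
    {x : T.carrier} {f : F.obj (T.p x) ⟶ d}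
    {x' : T.carrier} {f' : F.obj (T.p x') ⟶ d}
    (h : SStep F T x f x' f') : ZZ F T x f x' f' := by
  obtain ⟨b, c0, c1, k0, k1, u, u', y, v, h1, ⟨hc0, hk0⟩, h3, ⟨hc1, hk1⟩, h5⟩ := h
  refine ⟨y, 1, one_pos, fun _ => b, fun i => if i = 0 then c0 else c1,
    fun i => if h : i = 0 then eqToHom (by simp [h]) ≫ k0
      else eqToHom (by simp [h]) ≫ k1,
    fun i => if h : i = 0 then u ≫ eqToHom (by simp [h])
      else u' ≫ eqToHom (by simp [h]),
    fun i => u' ≫ eqToHom (by simp),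
    fun _ => v, ?_, ?_, ⟨hc0, by simpa using hk0⟩, ?_, ⟨hc1, by simpa using hk1⟩, ?_⟩
  · intro i hi
    interval_cases i
    simpa using h1
  · intro i hi; omega
  · simpa using h3
  · simpa using h5

lemma CAction.act_ext' (T : CAction.{v₁, u₁, w} C) {y x : T.carrier}
    (w : T.p y ⟶ T.p x) (hx : x = T.act y w) {c' : C} (ψ : T.p x ⟶ c') :
    T.act x ψ = T.act y (w ≫ ψ) := by
  simpa using T.act_ext w hx rfl ψ

lemma CAction.act_comp_eqToHom (T : CAction.{v₁, u₁, w} C) (x : T.carrier) {c c' : C}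
    (ψ : T.p x ⟶ c) (e : c = c') : T.act x (ψ ≫ eqToHom e) = T.act x ψ := by
  rw [T.act_comp, eqToHom_trans, T.act_eqToHom]

lemma zz_snoc (F : C ⥤ D) (T : CAction.{v₁, u₁, w} C) (hT : T.Flat) {d : D}
    {x : T.carrier} {f : F.obj (T.p x) ⟶ d}
    {x' : T.carrier} {f' : F.obj (T.p x') ⟶ d}
    {x'' : T.carrier} {f'' : F.obj (T.p x'') ⟶ d}
    (h : ZZ F T x f x' f') (hs : SStep F T x' f' x'' f'') : ZZ F T x f x'' f'' := by
  obtain ⟨y₁, n, hn, b₁, c₁, k₁, u₁, u₁', v₁, H1, H2, ⟨hc0, hk0⟩, hx, ⟨hcn, hkn⟩, hx'⟩ := h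
  obtain ⟨m, rfl⟩ : ∃ m, n = m + 1 := ⟨n - 1, (Nat.succ_pred_eq_of_pos hn).symm⟩
  have hx2 : x' = T.act y₁ (v₁ m ≫ u₁' m) := by simpa using hx'
  obtain ⟨B, C0, C1, K0, K1, U, U', y₂, V, S1, ⟨sc0, sk0⟩, sx, ⟨sc1, sk1⟩, sx'⟩ := hs
  obtain ⟨z, s, t, hy1, hy2⟩ := hT.2.1 y₁ y₂
  -- the two morphisms from z acting to x'
  have w₁ : T.p y₁ ⟶ c₁ (m + 1) := v₁ m ≫ u₁' m
  have hq₁ : x' = T.act z (s ≫ v₁ m ≫ u₁' m) := by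
    rw [hx2]; exact T.act_ext' s hy1 _
  have hq₂ : x' = T.act z (t ≫ (V ≫ U) ≫ eqToHom sc0 ≫ eqToHom hcn.symm) := by
    have e1 : T.act x' (eqToHom hcn.symm) = x' := T.act_eqToHom x' hcn.symm
    have e2 := T.act_ext (V ≫ U) sx sc0 (eqToHom hcn.symm)
    have e3 := T.act_ext' t hy2 ((V ≫ U) ≫ eqToHom sc0 ≫ eqToHom hcn.symm)
    rw [e1] at e2
    exact e2.trans e3
  have hzz : T.act z (s ≫ v₁ m ≫ u₁' m) = T.act z (t ≫ (V ≫ U) ≫ eqToHom sc0 ≫ eqToHom hcn.symm) :=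
    hq₁.symm.trans hq₂
  obtain ⟨y₀, r, hz, hr⟩ := hT.2.2 z _ _ hzz
  refine ⟨y₀, m + 2, by omega,
    -- b
    fun i => if i ≤ m then b₁ i else if i = m + 1 then B else C1,
    -- c
    fun i => if i ≤ m + 1 then c₁ i else C1,
    -- k
    fun i => if h : i ≤ m + 1 then
        eqToHom (show F.obj (if i ≤ m + 1 then c₁ i else C1) = F.obj (c₁ i) by rw [if_pos h]) ≫ k₁ i
      else
        eqToHom (show F.obj (if i ≤ m + 1 then c₁ i else C1) = F.obj C1 by rw [if_neg h]) ≫ K1,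
    -- u
    fun i => if h : i ≤ m then
        eqToHom (show (if i ≤ m then b₁ i else if i = m + 1 then B else C1) = b₁ i by rw [if_pos h]) ≫
          u₁ i ≫ eqToHom (show c₁ i = (if i ≤ m + 1 then c₁ i else C1) by rw [if_pos (by omega : i ≤ m + 1)])
      else if h2 : i = m + 1 then
        eqToHom (show (if i ≤ m then b₁ i else if i = m + 1 then B else C1) = B by rw [if_neg h, if_pos h2]) ≫
          (U ≫ eqToHom sc0 ≫ eqToHom hcn.symm) ≫
          eqToHom (show c₁ (m + 1) = (if i ≤ m + 1 then c₁ i else C1) by rw [if_pos (by omega : i ≤ m + 1), h2])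
      else
        eqToHom (show (if i ≤ m then b₁ i else if i = m + 1 then B else C1) = C1 by rw [if_neg h, if_neg h2]) ≫
          eqToHom (show C1 = (if i ≤ m + 1 then c₁ i else C1) by rw [if_neg (by omega : ¬ i ≤ m + 1)]),
    -- u'
    fun i => if h : i ≤ m then
        eqToHom (show (if i ≤ m then b₁ i else if i = m + 1 then B else C1) = b₁ i by rw [if_pos h]) ≫
          u₁' i ≫ eqToHom (show c₁ (i + 1) = (if i + 1 ≤ m + 1 then c₁ (i + 1) else C1) by rw [if_pos (by omega : i + 1 ≤ m + 1)])
      else if h2 : i = m + 1 then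
        eqToHom (show (if i ≤ m then b₁ i else if i = m + 1 then B else C1) = B by rw [if_neg h, if_pos h2]) ≫
          U' ≫ eqToHom (show C1 = (if i + 1 ≤ m + 1 then c₁ (i + 1) else C1) by rw [if_neg (by omega : ¬ i + 1 ≤ m + 1)])
      else
        eqToHom (show (if i ≤ m then b₁ i else if i = m + 1 then B else C1) = C1 by rw [if_neg h, if_neg h2]) ≫
          eqToHom (show C1 = (if i + 1 ≤ m + 1 then c₁ (i + 1) else C1) by rw [if_neg (by omega : ¬ i + 1 ≤ m + 1)]),
    -- v
    fun i => if h : i ≤ m then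
        (r ≫ s ≫ v₁ i) ≫ eqToHom (show b₁ i = (if i ≤ m then b₁ i else if i = m + 1 then B else C1) by rw [if_pos h])
      else if h2 : i = m + 1 then
        (r ≫ t ≫ V) ≫ eqToHom (show B = (if i ≤ m then b₁ i else if i = m + 1 then B else C1) by rw [if_neg h, if_pos h2])
      else
        (r ≫ t ≫ V ≫ U') ≫ eqToHom (show C1 = (if i ≤ m then b₁ i else if i = m + 1 then B else C1) by rw [if_neg h, if_neg h2]),
    ?_, ?_, ?_, ?_, ?_, ?_⟩
  · intro i hi
    by_cases h : i ≤ m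
    · have h' : i ≤ m + 1 := by omega
      have h'' : i + 1 ≤ m + 1 := by omega
      simp only [dif_pos h, dif_pos h', dif_pos h'', eqToHom_map, Functor.map_comp,
        eqToHom_trans_assoc, eqToHom_refl, Category.id_comp, Category.assoc, eqToHom_trans]
      rw [H1 i (by omega)]
    · have h2 : i = m + 1 := by omega
      subst h2
      have h' : m + 1 ≤ m + 1 := le_refl _
      have h'' : ¬ (m + 1 + 1 ≤ m + 1) := by omega
      have S1' : F.map U ≫ eqToHom (congrArg F.obj sc0) ≫ f'
          = F.map U' ≫ eqToHom (congrArg F.obj sc1) ≫ f'' := by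
        rw [← sk0, ← sk1]; exact S1
      simp only [dif_neg h, dif_pos h', dif_neg h'', dite_true, eqToHom_map,
        Functor.map_comp, eqToHom_trans_assoc, eqToHom_refl, Category.id_comp,
        Category.assoc, eqToHom_trans, hkn, sk1]
      rw [S1']
  · intro i hi1
    have h : i ≤ m := by omega
    simp only [dif_pos h]
    by_cases h2 : i + 1 ≤ m
    · simp only [dif_pos h2, Category.assoc, eqToHom_trans_assoc, eqToHom_refl,
        Category.id_comp]
      rw [reassoc_of% H2 i (by omega)]
    · have h3 : i = m := by omega
      subst h3
      have h4 : ¬ (i + 1 ≤ i) := by omega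
      simp only [dif_neg h4, dite_true, Category.assoc, eqToHom_trans_assoc, eqToHom_refl,
        Category.id_comp]
      rw [reassoc_of% hr]
      simp
  · refine ⟨by simp [hc0], ?_⟩
    have h : (0 : ℕ) ≤ m + 1 := by omega
    simp [dif_pos h, hk0]
    exact eqToHom_trans_assoc _ _ _
  · have h : (0 : ℕ) ≤ m := by omega
    have e1 := T.act_ext' s hy1 (v₁ 0 ≫ u₁ 0)
    have e2 := T.act_ext' r hz (s ≫ v₁ 0 ≫ u₁ 0)
    rw [hx, e1, e2]
    simp only [dif_pos h]
    rw [show ((r ≫ s ≫ v₁ 0) ≫ eqToHom (by rw [if_pos h])) ≫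
        (eqToHom (by rw [if_pos h]) ≫ u₁ 0 ≫ eqToHom (by rw [if_pos (by omega : (0:ℕ) ≤ m+1)]))
        = (r ≫ s ≫ v₁ 0 ≫ u₁ 0) ≫
          eqToHom (show c₁ 0 = (if 0 ≤ m + 1 then c₁ 0 else C1) by rw [if_pos (by omega : (0:ℕ) ≤ m+1)]) from by simp,
      T.act_comp_eqToHom]
  · have h : ¬ (m + 2 ≤ m + 1) := by omega
    refine ⟨by simp [h, sc1], ?_⟩
    simp [dif_neg h, sk1]
  · have h4 : ¬ (m + 1 ≤ m) := by omega
    have e1 := T.act_ext' t hy2 (V ≫ U')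
    have e2 := T.act_ext' r hz (t ≫ V ≫ U')
    rw [show m + 2 - 1 = m + 1 from rfl]
    simp only [dif_neg h4, dite_true]
    rw [sx', e1, e2]
    rw [show ((r ≫ t ≫ V) ≫ eqToHom (by rw [if_neg h4, if_pos rfl])) ≫
        (eqToHom (by rw [if_neg h4, if_pos rfl]) ≫ U' ≫
          eqToHom (by rw [if_neg (by omega : ¬ (m + 1 + 1 ≤ m + 1))]))
        = (r ≫ t ≫ V ≫ U') ≫
          eqToHom (show C1 = (if m + 1 + 1 ≤ m + 1 then c₁ (m + 1 + 1) else C1) by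
            rw [if_neg (by omega : ¬ (m + 1 + 1 ≤ m + 1))]) from by simp,
      T.act_comp_eqToHom]

lemma zz_of_eqvGen (F : C ⥤ D) (T : CAction.{v₁, u₁, w} C) (hT : T.Flat) {d : D}
    (x : T.carrier) (f : F.obj (T.p x) ⟶ d) (a : TPair F T)
    (h : Relation.ReflTransGen
      (fun a b => tensorRel F T a b ∨ tensorRel F T b a) (⟨x, d, f⟩ : TPair F T) a) :
    ∃ hd : a.2.1 = d, ZZ F T x f a.1 (a.2.2 ≫ eqToHom hd) := by
  induction h with
  | refl =>
    refine ⟨rfl, ?_⟩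
    have h0 : ZZ F T x f x f := sstep_to_zz F T (sstep_refl F T x f)
    simpa using h0
  | tail h1 h2 ih =>
    obtain ⟨hd, zz⟩ := ih
    rcases h2 with h2 | h2
    · rename_i b c'
      obtain ⟨xb, db, fb⟩ := b
      obtain ⟨c₀, u, g, hbf, rfl⟩ := h2
      simp only at hd zz hbf ⊢
      rw [hbf] at zz
      clear hbf
      refine ⟨hd, ?_⟩
      have step := sstep_fwd F T xb u (g ≫ eqToHom hd)
      have hres := zz_snoc F T hT (show ZZ F T x f xb (F.map u ≫ g ≫ eqToHom hd) by
        simpa using zz) step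
      simpa using hres
    · rename_i b c'
      obtain ⟨xc, dc, fc⟩ := c'
      obtain ⟨c₀, u, g, hcf, rfl⟩ := h2
      simp only at hd zz hcf ⊢
      refine ⟨hd, ?_⟩
      have step := sstep_symm F T (sstep_fwd F T xc u (g ≫ eqToHom hd))
      have hres := zz_snoc F T hT (show ZZ F T x f (T.act xc u)
          (eqToHom (congrArg F.obj (T.act_p xc u)) ≫ g ≫ eqToHom hd) by
        simpa using zz) step
      simpa [hcf] using hres
end Helpers

theorem stmt18 {C : Type u₁} [Category.{v₁} C] {D : Type u₂} [Category.{v₂} D]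
    (F : C ⥤ D) (T : CAction.{v₁, u₁, w} C) (hT : T.Flat)
    (x x' : T.carrier) (d : D)
    (f : F.obj (T.p x) ⟶ d) (f' : F.obj (T.p x') ⟶ d)
    (h : tmk F T ⟨x, d, f⟩ = tmk F T ⟨x', d, f'⟩) :
    ∃ (y : T.carrier) (n : ℕ), 0 < n ∧
      ∃ (b : ℕ → C) (c : ℕ → C)
        (k : ∀ i : ℕ, F.obj (c i) ⟶ d)
        (u : ∀ i : ℕ, b i ⟶ c i)
        (u' : ∀ i : ℕ, b i ⟶ c (i + 1))
        (v : ∀ i : ℕ, T.p y ⟶ b i),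
        (∀ i : ℕ, i < n → F.map (u i) ≫ k i = F.map (u' i) ≫ k (i + 1)) ∧
        (∀ i : ℕ, i + 1 < n → v i ≫ u' i = v (i + 1) ≫ u (i + 1)) ∧
        (∃ hc0 : c 0 = T.p x, k 0 = eqToHom (congrArg F.obj hc0) ≫ f) ∧
        x = T.act y (v 0 ≫ u 0) ∧
        (∃ hcn : c n = T.p x', k n = eqToHom (congrArg F.obj hcn) ≫ f') ∧
        x' = T.act y (v (n - 1) ≫ u' (n - 1)) := by
  have key : ∀ a b : TPair F T, Relation.EqvGen (tensorRel F T) a b →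
      Relation.ReflTransGen (fun a b => tensorRel F T a b ∨ tensorRel F T b a) a b := by
    intro a b hab
    induction hab with
    | rel _ _ hr => exact Relation.ReflTransGen.single (Or.inl hr)
    | refl _ => exact Relation.ReflTransGen.refl
    | symm _ _ _ ih =>
      exact (haveI : Std.Symm (fun a b => tensorRel F T a b ∨ tensorRel F T b a) :=
        ⟨fun _ _ hh => Or.symm hh⟩; Std.Symm.symm _ _ ih)
    | trans _ _ _ _ _ ih1 ih2 => exact ih1.trans ih2
  have hrt := key _ _ (Quot.eqvGen_exact h)
  obtain ⟨hd, zz⟩ := zz_of_eqvGen F T hT x f (⟨x', d, f'⟩ : TPair F T) hrt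
  have hzz : ZZ F T x f x' f' := by simpa using zz
  exact hzz

end PaperTor
end
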